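/- Let P be a rooted finite poset, Q a finite poset, and K a field. If every proper poset cycle in Q of length ≥ 6 admits a chord, then the ideal J_{P,Q} is generated by quadratic binomials. -/

import Mathlib

open MvPolynomial

/-- The `K`-algebra map sending the variable `t_φ` (indexed by an isotone map
`φ : P →o Q`) to the monomial `∏_{p ∈ P} x_{p, φ(p)}`. -/
noncomputable def isotonianMap (K P Q : Type) [Field K] [PartialOrder P] [Fintype P]
    [PartialOrder Q] [Fintype Q] :
    MvPolynomial (P →o Q) K →ₐ[K] MvPolynomial (P × Q) K :=
  aeval fun φ : P →o Q => ∏ p : P, X (p, φ p)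

/-- The defining ideal `J_{P,Q}` of the isotonian algebra `K[P,Q]`. -/
noncomputable def isotonianIdeal (K P Q : Type) [Field K] [PartialOrder P] [Fintype P]
    [PartialOrder Q] [Fintype Q] :
    Ideal (MvPolynomial (P →o Q) K) :=
  RingHom.ker (isotonianMap K P Q)

/-- A binomial `monomial u 1 - monomial v 1` which is quadratic: both monomials have degree 2. -/
def IsQuadraticBinomial {σ K : Type} [Field K] (f : MvPolynomial σ K) : Prop :=
  ∃ u v : σ →₀ ℕ, (u.sum fun _ e => e) = 2 ∧ (v.sum fun _ e => e) = 2 ∧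
    f = monomial u 1 - monomial v 1

/-- `q 0, q 1, …, q (2*m-1)` is a poset cycle of length `2*m` in `Q` (0-based version of
`q₁ ≤ q₂ ≥ q₃ ≤ ⋯ ≤ q_{2m} ≥ q₁`): every even-indexed element is below both of its cyclic
neighbors. -/
def IsPosetCycle {Q : Type} [PartialOrder Q] (m : ℕ) (q : ℕ → Q) : Prop :=
  ∀ i < m, q (2 * i) ≤ q (2 * i + 1) ∧ q (2 * i) ≤ q ((2 * i + 2 * m - 1) % (2 * m))

/-- The poset cycle `q 0, …, q (2*m-1)` has a chord: some even-indexed (0-based) element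
is below an odd-indexed element which is not one of its two cyclic neighbors. -/
def HasChord {Q : Type} [PartialOrder Q] (m : ℕ) (q : ℕ → Q) : Prop :=
  ∃ i < m, ∃ j < m, j ≠ i ∧ 2 * j + 1 ≠ (2 * i + 2 * m - 1) % (2 * m) ∧
    q (2 * i) ≤ q (2 * j + 1)

/-- The poset cycle `q 0, …, q (2*m-1)` is proper: its elements are pairwise distinct, the
even-indexed (0-based) elements are pairwise incomparable, and so are the odd-indexed ones. -/
def IsProperPosetCycle {Q : Type} [PartialOrder Q] (m : ℕ) (q : ℕ → Q) : Prop :=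
  (∀ i < 2 * m, ∀ j < 2 * m, i ≠ j → q i ≠ q j) ∧
  (∀ i < m, ∀ j < m, i ≠ j → ¬ q (2 * i) ≤ q (2 * j)) ∧
  (∀ i < m, ∀ j < m, i ≠ j → ¬ q (2 * i + 1) ≤ q (2 * j + 1))

/-!
Since `isotonianMap` sends monomials to monomials, its kernel is spanned by the binomials
`t^u - t^v` with equal images, that is, by pairs of multisets of isotone maps having the same
multiset of values at every `p ∈ P`. It therefore suffices to connect two such multisets by
swaps replacing `φ, ψ` by `φ', ψ'` with `{φ p, ψ p} = {φ' p, ψ' p}` for all `p`: a swap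
changes the monomial by a multiple of the quadratic binomial `t_φ t_ψ - t_φ' t_ψ'` of the
kernel.

We make the restrictions of the two multisets to a growing down-set `D` agree. Let `p` be
maximal in `D`, with lower cover `q`. In a rooted poset, everything below a point above `p`
is either above `p` or below `q`, so exchanging the parts of `φ` and `ψ` above `p` is legal
as soon as `φ q ≤ ψ p` and `ψ q ≤ φ p`. The step from `D \ {p}` to `D` thus amounts to
rewiring a matching between the values at `q` and the values at `p` by such exchanges. The
rewiring permutation splits into cycles, which are poset cycles in `Q`: a cycle of length 2
is a single exchange, and a longer one has a chord, which splits it into two shorter cycles.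
-/

open Equiv

/-- Every proper poset cycle in `Q` of length `2 * m ≥ 6` has a chord. -/
def IsChordal (Q : Type) [PartialOrder Q] : Prop :=
  ∀ m : ℕ, 3 ≤ m → ∀ q : ℕ → Q, IsPosetCycle m q → IsProperPosetCycle m q → HasChord m q

namespace List

variable {α : Type*} [DecidableEq α]

theorem formPerm_cons_append (x : α) (A B : List α) (h : (x :: (A ++ B)).Nodup) :
    formPerm (x :: (A ++ B)) = formPerm (x :: B) * formPerm (x :: A) := by
  induction A generalizing x with
  | nil => simp
  | cons c A ih =>
    have hc : (c :: (A ++ B)).Nodup := (nodup_cons.1 h).2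
    rw [cons_append, formPerm_cons_cons, ih c hc, formPerm_cons_cons, ← mul_assoc, ← mul_assoc]
    congr 1
    cases B with
    | nil => simp
    | cons d B =>
      have hx : x ∉ d :: B := fun hx => (nodup_cons.1 h).1 (by simp [hx])
      have hc' : c ∉ d :: B := fun hcB => (nodup_cons.1 hc).1 (by simp [hcB])
      have hxc : x ≠ c := fun hxc => (nodup_cons.1 h).1 (by simp [hxc])
      rw [formPerm_cons_cons, formPerm_cons_cons, mul_assoc, Equiv.mul_swap_eq_swap_mul,
        formPerm_apply_of_notMem hx, formPerm_apply_of_notMem hc', ← mul_assoc, ← mul_assoc]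
      congr 1
      have hxd : x ≠ d := fun e => hx (e ▸ mem_cons_self)
      have hcd : c ≠ d := fun e => hc' (e ▸ mem_cons_self)
      ext k
      simp only [Perm.coe_mul, Function.comp_apply, swap_apply_def]
      split_ifs <;> simp_all

theorem formPerm_pow_apply_mem {l : List α} {x : α} (hx : x ∈ l) (n : ℕ) :
    (l.formPerm ^ n) x ∈ l := by
  simpa using form_perm_zpow_apply_mem_imp_mem l x hx n

theorem formPerm_pow_apply_eq_iff {l : List α} (hl : l.Nodup) {x : α} (hx : x ∈ l) {i j : ℕ} :
    (l.formPerm ^ i) x = (l.formPerm ^ j) x ↔ i % l.length = j % l.length := by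
  obtain ⟨k, hk, rfl⟩ := getElem_of_mem hx
  rw [formPerm_pow_apply_getElem l hl, formPerm_pow_apply_getElem l hl, hl.getElem_inj_iff]
  exact ⟨Nat.ModEq.add_left_cancel' k, Nat.ModEq.add_left k⟩

theorem formPerm_formPerm_apply_ne {l : List α} (hl : l.Nodup) (hl3 : 3 ≤ l.length) {x : α}
    (hx : x ∈ l) : l.formPerm (l.formPerm x) ≠ x := by
  have h := (formPerm_pow_apply_eq_iff hl hx (i := 2) (j := 0)).not.2
    (by rw [Nat.mod_eq_of_lt (by omega), Nat.zero_mod]; omega)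
  simpa [sq] using h

/-- A chord from `u` to `w` splits the cycle `l.formPerm` into two shorter cycles. -/
theorem exists_formPerm_eq_mul {l : List α} (hl : l.Nodup) {u w : α} (hu : u ∈ l) (hw : w ∈ l)
    (hwu : w ≠ u) (hwπ : w ≠ l.formPerm u) :
    ∃ l₁ l₂ : List α, l₁.Nodup ∧ l₂.Nodup ∧ l₁.length < l.length ∧ l₂.length < l.length ∧
      l₁.formPerm u = w ∧ (∀ k ∈ l₂, k ≠ u → k ∉ l₁) ∧
      l.formPerm = l₁.formPerm * l₂.formPerm := by
  obtain ⟨s, t, rfl⟩ := mem_iff_append.1 hu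
  have hrot : s ++ u :: t ~r u :: (t ++ s) := by
    simpa using isRotated_append (l := s) (l' := u :: t)
  have hl' : (u :: (t ++ s)).Nodup := hrot.nodup_iff.1 hl
  rw [formPerm_eq_of_isRotated hl hrot, hrot.perm.length_eq] at *
  obtain ⟨A, B, hAB⟩ := mem_iff_append.1 (by simpa [hwu] using hrot.perm.subset hw :
    w ∈ t ++ s)
  rw [hAB] at hl' hwπ ⊢
  have hA : A ≠ [] := by
    rintro rfl
    exact hwπ (formPerm_apply_head _ _ _ hl').symm
  have h₁ : (u :: w :: B).Nodup := hl'.sublist ((sublist_append_right A _).cons_cons u)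
  refine ⟨u :: w :: B, u :: A, h₁, hl'.sublist ((sublist_append_left A _).cons_cons u), ?_, ?_,
    formPerm_apply_head _ _ _ h₁, ?_, formPerm_cons_append u A (w :: B) hl'⟩
  · simp [Nat.pos_of_ne_zero (length_eq_zero_iff.not.2 hA)]
  · simp
  · intro k hk hku hk'
    simp only [nodup_cons, nodup_append, mem_append] at hl'
    simp only [mem_cons] at hk hk'
    grind

end List

theorem Nat.two_mul_add_two_mul_sub_one_mod {i m : ℕ} (hi : i < m) :
    (2 * i + 2 * m - 1) % (2 * m) = if i = 0 then 2 * m - 1 else 2 * i - 1 := by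
  split_ifs with h
  · rw [h, Nat.mod_eq_of_lt (by omega)]; omega
  · rw [show 2 * i + 2 * m - 1 = 2 * i - 1 + 2 * m by omega, Nat.add_mod_right,
      Nat.mod_eq_of_lt (by omega)]

section PosetCycle

variable {ι : Type*} {Q : Type} {a b : ι → Q} {π : Perm ι} {x : ι}

/-- The cycle of `π` through `x`, read as the poset cycle
`a x ≤ b (π x) ≥ a (π x) ≤ b (π² x) ≥ ⋯`. -/
def posetCycleOf (a b : ι → Q) (π : Perm ι) (x : ι) (j : ℕ) : Q :=
  if j % 2 = 0 then a ((π ^ (j / 2)) x) else b ((π ^ (j / 2 + 1)) x)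

@[simp]
theorem posetCycleOf_two_mul (i : ℕ) : posetCycleOf a b π x (2 * i) = a ((π ^ i) x) := by
  simp [posetCycleOf]

@[simp]
theorem posetCycleOf_two_mul_add_one (i : ℕ) :
    posetCycleOf a b π x (2 * i + 1) = b ((π ^ (i + 1)) x) := by
  simp [posetCycleOf, Nat.add_mod, Nat.add_div]

theorem isPosetCycle_posetCycleOf [PartialOrder Q] (hval : ∀ k, a k ≤ b k)
    (hadm : ∀ k, a k ≤ b (π k)) {m : ℕ} (hm : 0 < m) (hx : (π ^ m) x = x) :
    IsPosetCycle m (posetCycleOf a b π x) := by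
  intro i hi
  refine ⟨by simpa [pow_succ'] using hadm ((π ^ i) x), ?_⟩
  rw [Nat.two_mul_add_two_mul_sub_one_mod hi]
  split_ifs with h
  · subst h
    rw [show 2 * m - 1 = 2 * (m - 1) + 1 by omega, posetCycleOf_two_mul_add_one,
      Nat.sub_add_cancel hm, hx, posetCycleOf_two_mul, pow_zero]
    exact hval x
  · rw [show 2 * i - 1 = 2 * (i - 1) + 1 by omega, posetCycleOf_two_mul_add_one,
      Nat.sub_add_cancel (Nat.pos_of_ne_zero h), posetCycleOf_two_mul]
    exact hval _

end PosetCycle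

section Chord

variable {ι : Type*} [DecidableEq ι] {Q : Type} [PartialOrder Q] {a b : ι → Q} {l : List ι}

/-- A chord of the cycle `l.formPerm` in the bipartite comparability graph between the lower
values `a` and the upper values `b`, whose cycle edges are `a k ≤ b k` and
`a k ≤ b (l.formPerm k)`. -/
def IsChord (a b : ι → Q) (l : List ι) (u w : ι) : Prop :=
  u ∈ l ∧ w ∈ l ∧ w ≠ u ∧ w ≠ l.formPerm u ∧ a u ≤ b w

theorem exists_isChord_of_lower_le (hl : l.Nodup) (hl3 : 3 ≤ l.length) (hval : ∀ k, a k ≤ b k)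
    (hadm : ∀ k, a k ≤ b (l.formPerm k)) {u v : ι} (hu : u ∈ l) (hv : v ∈ l) (huv : u ≠ v)
    (h : a u ≤ a v) : ∃ u w, IsChord a b l u w := by
  have hπu := l.formPerm_apply_mem_of_mem hu
  by_cases hv' : v = l.formPerm u
  · subst hv'
    refine ⟨u, _, hu, l.formPerm_apply_mem_of_mem hπu, l.formPerm_formPerm_apply_ne hl hl3 hu,
      fun e => ?_, h.trans (hadm _)⟩
    exact ((l.formPerm_apply_mem_ne_self_iff hl _ hπu).2 (by omega)) e
  · exact ⟨u, v, hu, hv, huv.symm, hv', h.trans (hval v)⟩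

theorem exists_isChord_of_upper_le (hl : l.Nodup) (hl3 : 3 ≤ l.length) (hval : ∀ k, a k ≤ b k)
    (hadm : ∀ k, a k ≤ b (l.formPerm k)) {u v : ι} (hu : u ∈ l) (hv : v ∈ l) (huv : u ≠ v)
    (h : b u ≤ b v) : ∃ u w, IsChord a b l u w := by
  by_cases hv' : v = l.formPerm u
  · subst hv'
    set w := (l.formPerm)⁻¹ u
    have hw : l.formPerm w = u := by simp [w]
    refine ⟨w, _, l.formPerm_mem_iff_mem.1 (hw ▸ hu), l.formPerm_apply_mem_of_mem hu, ?_,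
      by rw [hw]; exact huv.symm, (hadm w).trans (hw ▸ h)⟩
    intro e
    exact l.formPerm_formPerm_apply_ne hl hl3 hu (by rw [e, hw])
  · exact ⟨u, v, hu, hv, huv.symm, hv', (hval u).trans h⟩

theorem exists_isChord_of_lower_eq_upper (hl : l.Nodup) (hl3 : 3 ≤ l.length)
    (hval : ∀ k, a k ≤ b k) (hadm : ∀ k, a k ≤ b (l.formPerm k)) {u v : ι} (hu : u ∈ l)
    (hv : v ∈ l) (h : a u = b v) : ∃ u w, IsChord a b l u w := by
  have hπu : l.formPerm u ≠ u := (l.formPerm_apply_mem_ne_self_iff hl u hu).2 (by omega)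
  by_cases hvu : v = u
  · subst hvu
    exact exists_isChord_of_upper_le hl hl3 hval hadm hv (l.formPerm_apply_mem_of_mem hv)
      hπu.symm (h ▸ hadm v)
  by_cases hvπ : v = l.formPerm u
  · subst hvπ
    exact exists_isChord_of_upper_le hl hl3 hval hadm hv hu hπu (h ▸ hval u)
  exact ⟨u, v, hu, hv, hvu, hvπ, h.le⟩

theorem exists_isChord_of_hasChord (hl : l.Nodup) (hl3 : 3 ≤ l.length) {x : ι} (hx : x ∈ l)
    (h : HasChord l.length (posetCycleOf a b l.formPerm x)) : ∃ u w, IsChord a b l u w := by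
  obtain ⟨i, hi, j, hj, hji, hj', hle⟩ := h
  simp only [posetCycleOf_two_mul, posetCycleOf_two_mul_add_one] at hle
  refine ⟨_, _, l.formPerm_pow_apply_mem hx i, l.formPerm_pow_apply_mem hx (j + 1),
    fun e => hj' ?_, fun e => hji ?_, hle⟩
  · rw [l.formPerm_pow_apply_eq_iff hl hx, Nat.mod_eq_of_lt hi] at e
    rw [Nat.two_mul_add_two_mul_sub_one_mod hi]
    rcases Nat.lt_or_ge (j + 1) l.length with hj1 | hj1
    · rw [Nat.mod_eq_of_lt hj1] at e
      split_ifs <;> omega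
    · rw [show j + 1 = l.length by omega, Nat.mod_self] at e
      split_ifs <;> omega
  · rw [← Perm.mul_apply, ← pow_succ', l.formPerm_pow_apply_eq_iff hl hx] at e
    have := Nat.ModEq.add_right_cancel' 1 e
    rwa [Nat.ModEq, Nat.mod_eq_of_lt hj, Nat.mod_eq_of_lt hi] at this

theorem exists_isChord_of_not_isProperPosetCycle (hl : l.Nodup) (hl3 : 3 ≤ l.length)
    (hval : ∀ k, a k ≤ b k) (hadm : ∀ k, a k ≤ b (l.formPerm k)) {x : ι} (hx : x ∈ l)
    (h : ¬ IsProperPosetCycle l.length (posetCycleOf a b l.formPerm x)) :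
    ∃ u w, IsChord a b l u w := by
  have hmem (i : ℕ) := l.formPerm_pow_apply_mem hx i
  have hne {i j : ℕ} (hi : i < l.length) (hj : j < l.length) (hij : i ≠ j) :
      (l.formPerm ^ i) x ≠ (l.formPerm ^ j) x := by
    rwa [Ne, l.formPerm_pow_apply_eq_iff hl hx, Nat.mod_eq_of_lt hi, Nat.mod_eq_of_lt hj]
  have hne_succ {i j : ℕ} (hi : i < l.length) (hj : j < l.length) (hij : i ≠ j) :
      (l.formPerm ^ (i + 1)) x ≠ (l.formPerm ^ (j + 1)) x := by
    simpa only [pow_succ', Perm.mul_apply, ne_eq, EmbeddingLike.apply_eq_iff_eq] using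
      hne hi hj hij
  simp only [IsProperPosetCycle, not_and_or, not_forall, not_not, exists_prop] at h
  rcases h with ⟨i, hi, j, hj, hij, he⟩ | ⟨i, hi, j, hj, hij, hle⟩ | ⟨i, hi, j, hj, hij, hle⟩
  · obtain ⟨i, rfl | rfl⟩ := Nat.even_or_odd' i <;>
      obtain ⟨j, rfl | rfl⟩ := Nat.even_or_odd' j <;>
      simp only [posetCycleOf_two_mul, posetCycleOf_two_mul_add_one] at he
    · exact exists_isChord_of_lower_le hl hl3 hval hadm (hmem _) (hmem _)
        (hne (by omega) (by omega) (by omega)) he.le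
    · exact exists_isChord_of_lower_eq_upper hl hl3 hval hadm (hmem _) (hmem _) he
    · exact exists_isChord_of_lower_eq_upper hl hl3 hval hadm (hmem _) (hmem _) he.symm
    · exact exists_isChord_of_upper_le hl hl3 hval hadm (hmem _) (hmem _)
        (hne_succ (by omega) (by omega) (by omega)) he.le
  · simp only [posetCycleOf_two_mul] at hle
    exact exists_isChord_of_lower_le hl hl3 hval hadm (hmem _) (hmem _) (hne hi hj hij) hle
  · simp only [posetCycleOf_two_mul_add_one] at hle
    exact exists_isChord_of_upper_le hl hl3 hval hadm (hmem _) (hmem _) (hne_succ hi hj hij) hle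

theorem exists_isChord (hQ : IsChordal Q) (hl : l.Nodup) (hl3 : 3 ≤ l.length)
    (hval : ∀ k, a k ≤ b k) (hadm : ∀ k, a k ≤ b (l.formPerm k)) : ∃ u w, IsChord a b l u w := by
  obtain ⟨x, hx⟩ := List.exists_mem_of_length_pos (by omega : 0 < l.length)
  have hcycle := isPosetCycle_posetCycleOf hval hadm (by omega)
    (by simp [l.formPerm_pow_length_eq_one_of_nodup hl] : (l.formPerm ^ l.length) x = x)
  by_cases hproper : IsProperPosetCycle l.length (posetCycleOf a b l.formPerm x)
  · exact exists_isChord_of_hasChord hl hl3 hx (hQ _ hl3 _ hcycle hproper)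
  · exact exists_isChord_of_not_isProperPosetCycle hl hl3 hval hadm hx hproper

end Chord

def Exchange {ι Q : Type*} [DecidableEq ι] [PartialOrder Q] (a b b' : ι → Q) : Prop :=
  ∃ i j, i ≠ j ∧ a i ≤ b j ∧ a j ≤ b i ∧ b' = b ∘ swap i j

section Exchange

variable {ι : Type*} [DecidableEq ι] {Q : Type} [PartialOrder Q]

theorem reflTransGen_exchange_comp_formPerm {a : ι → Q} (hQ : IsChordal Q) {l : List ι}
    (hl : l.Nodup) {b : ι → Q} (hval : ∀ k, a k ≤ b k) (hadm : ∀ k, a k ≤ b (l.formPerm k)) :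
    Relation.ReflTransGen (Exchange a) b (b ∘ l.formPerm) := by
  induction hn : l.length using Nat.strong_induction_on generalizing l b with
  | _ n ih =>
  rcases Nat.lt_or_ge n 3 with hn3 | hn3
  · rcases Nat.lt_or_ge n 2 with hn2 | hn2
    · rw [(List.formPerm_eq_one_iff _ hl).2 (by omega), Perm.coe_one, Function.comp_id]
    · obtain ⟨x, y, rfl⟩ := List.length_eq_two.1 (show l.length = 2 by omega)
      have hxy : x ≠ y := by simpa using hl
      refine .single ⟨x, y, hxy, ?_, ?_, by rw [List.formPerm_pair]⟩
      · simpa using hadm x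
      · simpa using hadm y
  obtain ⟨u, w, hu, hw, hwu, hwπ, hle⟩ := exists_isChord hQ hl (hn ▸ hn3) hval hadm
  obtain ⟨l₁, l₂, hl₁, hl₂, hlen₁, hlen₂, hu₁, hdisj, hmul⟩ :=
    List.exists_formPerm_eq_mul hl hu hw hwu hwπ
  have hadm₁ (k : ι) : a k ≤ b (l₁.formPerm k) := by
    by_cases hk : k ∈ l₂
    · by_cases hku : k = u
      · rwa [hku, hu₁]
      · rw [List.formPerm_apply_of_notMem (hdisj k hk hku)]
        exact hval k
    · simpa [hmul, List.formPerm_apply_of_notMem hk] using hadm k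
  have h₁ := ih _ (hn ▸ hlen₁) hl₁ hval hadm₁ rfl
  have h₂ := ih _ (hn ▸ hlen₂) hl₂ (b := b ∘ l₁.formPerm) hadm₁
    (fun k => by simpa [hmul] using hadm k) rfl
  rw [hmul, Perm.coe_mul, ← Function.comp_assoc]
  exact h₁.trans h₂

theorem reflTransGen_exchange_comp_perm [Fintype ι] {a : ι → Q} (hQ : IsChordal Q) (π : Perm ι)
    {b : ι → Q} (hval : ∀ k, a k ≤ b k) (hadm : ∀ k, a k ≤ b (π k)) :
    Relation.ReflTransGen (Exchange a) b (b ∘ π) := by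
  induction π using Perm.cycle_induction_on generalizing b with
  | base_one => rfl
  | base_cycles σ hσ =>
    obtain ⟨x, hx, -⟩ := id hσ
    rw [← hσ.cycleOf_eq hx, ← Perm.formPerm_toList] at hadm ⊢
    exact reflTransGen_exchange_comp_formPerm hQ (Perm.nodup_toList σ x) hval hadm
  | induction_disjoint σ τ hστ _ ihσ ihτ =>
    have hadmσ (k : ι) : a k ≤ b (σ k) := by
      rcases hστ k with hk | hk
      · rw [hk]; exact hval k
      · simpa [hk] using hadm k
    exact (ihσ hval hadmσ).trans (ihτ (b := b ∘ σ) hadmσ hadm)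

end Exchange

theorem exists_equiv_comp_eq {ι ι' α : Type*} [Fintype ι] [Fintype ι'] {u : ι → α} {v : ι' → α}
    (h : Finset.univ.val.map u = Finset.univ.val.map v) : ∃ e : ι ≃ ι', v ∘ e = u := by
  classical
  have hcard (x : α) : Fintype.card {i // u i = x} = Fintype.card {i // v i = x} := by
    have := congrArg (Multiset.count x) h
    simp only [Multiset.count_map] at this
    simpa [Fintype.card_subtype, Finset.card, Finset.filter_val, eq_comm] using this
  refine ⟨(sigmaFiberEquiv u).symm.trans ((sigmaCongrRight fun x =>
    Fintype.equivOfCardEq (hcard x)).trans (sigmaFiberEquiv v)), funext fun i => ?_⟩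
  exact (Fintype.equivOfCardEq (hcard (u i)) ⟨i, rfl⟩).2

section Glue

variable {P Q : Type*} [PartialOrder P] [PartialOrder Q] {p q : P}

open Classical in
/-- Monotone because, `P` being rooted, an element below a point above `p` is either above `p`
or below `q`. -/
noncomputable def glueAbove (hroot : ∀ a b c : P, a ≤ c → b ≤ c → a ≤ b ∨ b ≤ a)
    (hq : ∀ x < p, x ≤ q) (φ ψ : P →o Q) (h : φ q ≤ ψ p) : P →o Q where
  toFun x := if p ≤ x then ψ x else φ x
  monotone' x y hxy := by
    dsimp only
    split_ifs with hx hy hy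
    · exact ψ.monotone hxy
    · exact absurd (hx.trans hxy) hy
    · have hxp : x < p := ((hroot x p y hxy hy).resolve_right hx).lt_of_not_ge hx
      exact (φ.monotone (hq x hxp)).trans (h.trans (ψ.monotone hy))
    · exact φ.monotone hxy

variable {hroot : ∀ a b c : P, a ≤ c → b ≤ c → a ≤ b ∨ b ≤ a} {hq : ∀ x < p, x ≤ q}
  {φ ψ : P →o Q} {x : P}

theorem glueAbove_apply_of_le {h : φ q ≤ ψ p} (hx : p ≤ x) :
    glueAbove hroot hq φ ψ h x = ψ x := by
  simp only [glueAbove]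
  exact if_pos hx

theorem glueAbove_apply_of_not_le {h : φ q ≤ ψ p} (hx : ¬ p ≤ x) :
    glueAbove hroot hq φ ψ h x = φ x := by
  simp only [glueAbove]
  exact if_neg hx

theorem glueAbove_self {h : φ q ≤ φ p} : glueAbove hroot hq φ φ h = φ := by
  ext x
  by_cases hx : p ≤ x
  · exact glueAbove_apply_of_le hx
  · exact glueAbove_apply_of_not_le hx

end Glue

section Swap

variable {P Q : Type*} [PartialOrder P] [PartialOrder Q]

def SwapStep (M M' : Multiset (P →o Q)) : Prop :=
  ∃ φ ψ φ' ψ' C, (∀ x, ({φ x, ψ x} : Multiset Q) = {φ' x, ψ' x}) ∧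
    M = φ ::ₘ ψ ::ₘ C ∧ M' = φ' ::ₘ ψ' ::ₘ C

theorem SwapStep.map_apply {M M' : Multiset (P →o Q)} (h : SwapStep M M') (x : P) :
    M'.map (· x) = M.map (· x) := by
  obtain ⟨φ, ψ, φ', ψ', C, hswap, rfl, rfl⟩ := h
  simpa using congrArg (· + C.map (· x)) (hswap x).symm

theorem Relation.ReflTransGen.swapStep_map_apply {M M' : Multiset (P →o Q)}
    (h : Relation.ReflTransGen SwapStep M M') (x : P) : M'.map (· x) = M.map (· x) := by
  induction h with
  | refl => rfl
  | tail _ hstep ih => exact (hstep.map_apply x).trans ih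

variable {ι : Type*} [Fintype ι] [DecidableEq ι]

theorem swapStep_map_univ {f f' : ι → P →o Q} {i j : ι} (hij : i ≠ j)
    (hswap : ∀ x, ({f i x, f j x} : Multiset Q) = {f' i x, f' j x})
    (hrest : ∀ k, k ≠ i → k ≠ j → f' k = f k) :
    SwapStep (Finset.univ.val.map f) (Finset.univ.val.map f') := by
  set R := (Finset.univ.val.erase i).erase j
  have huniv : (Finset.univ : Finset ι).val = i ::ₘ j ::ₘ R := by
    rw [Multiset.cons_erase (Multiset.mem_erase_of_ne hij.symm |>.2 (Finset.mem_univ_val j)),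
      Multiset.cons_erase (Finset.mem_univ_val i)]
  have hR {k : ι} (hk : k ∈ R) : k ≠ i ∧ k ≠ j := by
    obtain ⟨hkj, hk⟩ := (Finset.univ.nodup.erase i).mem_erase_iff.1 hk
    exact ⟨(Finset.univ.nodup.mem_erase_iff.1 hk).1, hkj⟩
  refine ⟨f i, f j, f' i, f' j, R.map f, hswap, by rw [huniv]; simp, ?_⟩
  rw [huniv, Multiset.map_cons, Multiset.map_cons, Multiset.map_congr rfl fun k hk =>
    hrest k (hR hk).1 (hR hk).2]

variable {p q : P}

theorem exists_swapStep_of_exchange (hroot : ∀ a b c : P, a ≤ c → b ≤ c → a ≤ b ∨ b ≤ a)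
    (hqp : q < p) (hq : ∀ x < p, x ≤ q) {a b b' : ι → Q} (h : Exchange a b b')
    (f : ι → P →o Q) (hfq : ∀ k, f k q = a k) (hfp : ∀ k, f k p = b k) :
    ∃ f' : ι → P →o Q, SwapStep (Finset.univ.val.map f) (Finset.univ.val.map f') ∧
      (∀ k, f' k p = b' k) ∧ ∀ k x, ¬ p ≤ x → f' k x = f k x := by
  obtain ⟨i, j, hij, hi, hj, rfl⟩ := h
  have hle (k : ι) : f k q ≤ f (swap i j k) p := by
    rw [hfq, hfp]
    rcases eq_or_ne k i with rfl | hki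
    · simpa using hi
    rcases eq_or_ne k j with rfl | hkj
    · simpa using hj
    rw [swap_apply_of_ne_of_ne hki hkj, ← hfq, ← hfp]
    exact (f k).monotone hqp.le
  refine ⟨fun k => glueAbove hroot hq (f k) (f (swap i j k)) (hle k), swapStep_map_univ hij
    (fun x => ?_) (fun k hki hkj => ?_), fun k => ?_, fun k x hx => glueAbove_apply_of_not_le hx⟩
  · by_cases hx : p ≤ x
    · simp only [glueAbove_apply_of_le hx, swap_apply_left, swap_apply_right]
      exact Multiset.pair_comm _ _
    · simp only [glueAbove_apply_of_not_le hx]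
  · simp only [swap_apply_of_ne_of_ne hki hkj, glueAbove_self]
  · rw [glueAbove_apply_of_le le_rfl, hfp]
    rfl

theorem exists_reflTransGen_swapStep_of_exchange
    (hroot : ∀ a b c : P, a ≤ c → b ≤ c → a ≤ b ∨ b ≤ a) (hqp : q < p) (hq : ∀ x < p, x ≤ q)
    {a b b' : ι → Q} (h : Relation.ReflTransGen (Exchange a) b b') (f : ι → P →o Q)
    (hfq : ∀ k, f k q = a k) (hfp : ∀ k, f k p = b k) :
    ∃ f' : ι → P →o Q, Relation.ReflTransGen SwapStep (Finset.univ.val.map f)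
      (Finset.univ.val.map f') ∧ (∀ k, f' k p = b' k) ∧ ∀ k x, ¬ p ≤ x → f' k x = f k x := by
  induction h with
  | refl => exact ⟨f, .refl, hfp, fun _ _ _ => rfl⟩
  | tail _ hstep ih =>
    obtain ⟨f₁, hreach, hf₁p, hf₁⟩ := ih
    have hf₁q (k : ι) : f₁ k q = a k := (hf₁ k q (not_le_of_gt hqp)).trans (hfq k)
    obtain ⟨f₂, hswap, hf₂p, hf₂⟩ :=
      exists_swapStep_of_exchange hroot hqp hq hstep f₁ hf₁q hf₁p
    exact ⟨f₂, hreach.tail hswap, hf₂p, fun k x hx => (hf₂ k x hx).trans (hf₁ k x hx)⟩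

end Swap

section Restrict

variable {P Q : Type*} [PartialOrder P] [PartialOrder Q]

def restrictTo (D : Finset P) (φ : P →o Q) : D → Q := fun x => φ x

theorem map_restrictTo_eq_of_subset_singleton {D : Finset P} {p : P} (hD : D ⊆ {p})
    {M N : Multiset (P →o Q)} (h : M.map (· p) = N.map (· p)) :
    M.map (restrictTo D) = N.map (restrictTo D) := by
  have : (restrictTo D : (P →o Q) → D → Q) = (fun v (_ : D) => v) ∘ (· p) := by
    ext φ x
    simp [restrictTo, Finset.mem_singleton.1 (hD x.2)]
  rw [this, ← Multiset.map_map, ← Multiset.map_map, h]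

theorem map_restrictTo_eq_of_erase [DecidableEq P] {D : Finset P} {p : P}
    {M N : Multiset (P →o Q)}
    (h : M.map (fun φ => (restrictTo (D.erase p) φ, φ p)) =
      N.map (fun φ => (restrictTo (D.erase p) φ, φ p))) :
    M.map (restrictTo D) = N.map (restrictTo D) := by
  have : (restrictTo D : (P →o Q) → D → Q) = (fun rv (x : D) => if h : x.1 = p then rv.2 else
      rv.1 ⟨x.1, Finset.mem_erase.2 ⟨h, x.2⟩⟩) ∘ fun φ => (restrictTo (D.erase p) φ, φ p) := by
    ext φ x
    by_cases h : x.1 = p <;> simp [restrictTo, h]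
  rw [this, ← Multiset.map_map, ← Multiset.map_map, h]

end Restrict

theorem exists_forall_lt_le {P : Type*} [PartialOrder P] [Fintype P]
    (hroot : ∀ a b c : P, a ≤ c → b ≤ c → a ≤ b ∨ b ≤ a) {p : P} (h : ∃ x, x < p) :
    ∃ q < p, ∀ x < p, x ≤ q := by
  classical
  obtain ⟨q, hq⟩ := Finset.exists_maximal (s := Finset.univ.filter (· < p))
    (by simpa [Finset.Nonempty] using h)
  have hqp : q < p := by simpa using hq.prop
  exact ⟨q, hqp, fun x hx => (hroot x q p hx.le hqp.le).elim id (hq.2 (by simpa using hx))⟩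

section Connect

variable {P : Type*} [PartialOrder P] {Q : Type} [PartialOrder Q] {p q : P}

theorem exists_reflTransGen_swapStep_restrictTo_and_apply (hQ : IsChordal Q)
    (hroot : ∀ a b c : P, a ≤ c → b ≤ c → a ≤ b ∨ b ≤ a) (hqp : q < p) (hq : ∀ x < p, x ≤ q)
    {E : Finset P} (hqE : q ∈ E) (hpE : ∀ x ∈ E, ¬ p ≤ x) {M N : Multiset (P →o Q)}
    (hE : M.map (restrictTo E) = N.map (restrictTo E)) (hp : M.map (· p) = N.map (· p)) :
    ∃ M', Relation.ReflTransGen SwapStep M M' ∧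
      M'.map (fun φ => (restrictTo E φ, φ p)) = N.map (fun φ => (restrictTo E φ, φ p)) := by
  classical
  -- index `N` by the elements of `M` so that corresponding maps agree on `E`
  obtain ⟨e, he⟩ := exists_equiv_comp_eq (u := fun k : M => restrictTo E k.1)
    (v := fun k : N => restrictTo E k.1) (by simpa using hE)
  let f : M → P →o Q := fun k => k.1
  let g : M → P →o Q := fun k => (e k).1
  have hM : Finset.univ.val.map f = M := Multiset.map_univ_coe M
  have hN : Finset.univ.val.map g = N := by
    rw [← Multiset.map_univ_coe N, ← Multiset.map_univ_val_equiv e, Multiset.map_map]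
    rfl
  have hfg (k : M) : restrictTo E (f k) = restrictTo E (g k) := (congrFun he k).symm
  obtain ⟨π, hπ⟩ := exists_equiv_comp_eq (u := fun k => g k p) (v := fun k => f k p) (by
    rw [show (fun k => g k p) = (· p) ∘ g from rfl, ← Multiset.map_map, hN, ← hp]
    exact (Multiset.map_univ M (· p)).symm)
  have hadm (k : M) : f k q ≤ f (π k) p := by
    rw [show f (π k) p = g k p from congrFun hπ k,
      show f k q = g k q from congrFun (hfg k) ⟨q, hqE⟩]
    exact (g k).monotone hqp.le
  obtain ⟨f', hreach, hf'p, hf'⟩ := exists_reflTransGen_swapStep_of_exchange hroot hqp hq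
    (reflTransGen_exchange_comp_perm hQ π (fun k => (f k).monotone hqp.le) hadm) f
    (fun _ => rfl) (fun _ => rfl)
  rw [hM] at hreach
  refine ⟨Finset.univ.val.map f', hreach, ?_⟩
  rw [← hN, Multiset.map_map, Multiset.map_map]
  refine Multiset.map_congr rfl fun k _ => ?_
  simp only [Function.comp_apply, Prod.mk.injEq]
  refine ⟨?_, (hf'p k).trans (congrFun hπ k)⟩
  rw [← hfg]
  ext x
  exact hf' k x (hpE x x.2)

theorem exists_reflTransGen_swapStep_restrictTo [Fintype P] (hQ : IsChordal Q)
    (hmin : ∃ p₀ : P, ∀ x : P, p₀ ≤ x) (hroot : ∀ a b c : P, a ≤ c → b ≤ c → a ≤ b ∨ b ≤ a)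
    {M N : Multiset (P →o Q)} (hcol : ∀ x, M.map (· x) = N.map (· x)) (D : Finset P)
    (hD : IsLowerSet (D : Set P)) :
    ∃ M', Relation.ReflTransGen SwapStep M M' ∧ M'.map (restrictTo D) = N.map (restrictTo D) := by
  classical
  obtain ⟨p₀, hp₀⟩ := hmin
  induction D using Finset.strongInduction with
  | H D ih =>
  rcases D.eq_empty_or_nonempty with rfl | hne
  · exact ⟨M, .refl, map_restrictTo_eq_of_subset_singleton (Finset.empty_subset {p₀}) (hcol p₀)⟩
  obtain ⟨p, hp⟩ := Finset.exists_maximal hne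
  have hmax (x : P) (hx : x ∈ D) (hpx : p ≤ x) : x = p := le_antisymm (hp.2 hx hpx) hpx
  by_cases hbelow : ∃ x, x < p
  swap
  -- `p` is the least element, so `D = {p}`
  · have hp₀p : p₀ = p := (hp₀ p).eq_or_lt.resolve_right fun h => hbelow ⟨p₀, h⟩
    refine ⟨M, .refl, map_restrictTo_eq_of_subset_singleton (fun x hx => ?_) (hcol p)⟩
    exact Finset.mem_singleton.2 (hmax x hx (hp₀p ▸ hp₀ x))
  obtain ⟨q, hqp, hqmax⟩ := exists_forall_lt_le hroot hbelow
  set E := D.erase p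
  have hpE (x : P) (hx : x ∈ E) : ¬ p ≤ x := fun hpx =>
    (Finset.mem_erase.1 hx).1 (hmax x (Finset.mem_of_mem_erase hx) hpx)
  have hE : IsLowerSet (E : Set P) := fun y x hxy hy => by
    obtain ⟨hyp, hyD⟩ := Finset.mem_erase.1 hy
    refine Finset.mem_erase.2 ⟨?_, hD hxy hyD⟩
    intro hxp
    exact hyp (hmax y hyD (hxp ▸ hxy))
  obtain ⟨M₁, h₁, hM₁⟩ := ih E (Finset.erase_ssubset hp.prop) hE
  obtain ⟨M₂, h₂, hM₂⟩ := exists_reflTransGen_swapStep_restrictTo_and_apply hQ hroot hqp hqmax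
    (Finset.mem_erase.2 ⟨hqp.ne, hD hqp.le hp.prop⟩) hpE hM₁
    ((h₁.swapStep_map_apply p).trans (hcol p))
  exact ⟨M₂, h₁.trans h₂, map_restrictTo_eq_of_erase hM₂⟩

theorem reflTransGen_swapStep_of_map_apply_eq [Fintype P] (hQ : IsChordal Q)
    (hmin : ∃ p₀ : P, ∀ x : P, p₀ ≤ x) (hroot : ∀ a b c : P, a ≤ c → b ≤ c → a ≤ b ∨ b ≤ a)
    {M N : Multiset (P →o Q)} (hcol : ∀ x, M.map (· x) = N.map (· x)) :
    Relation.ReflTransGen SwapStep M N := by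
  obtain ⟨M', h, hM'⟩ := exists_reflTransGen_swapStep_restrictTo hQ hmin hroot hcol
    Finset.univ (by simp [isLowerSet_univ])
  have hinj : Function.Injective (restrictTo (Finset.univ : Finset P) : (P →o Q) → _) :=
    fun φ ψ h => OrderHom.ext _ _ (funext fun x => congrFun h ⟨x, Finset.mem_univ x⟩)
  rwa [Multiset.map_injective hinj hM'] at h

end Connect

/-- With `r` a section of `e` and `L` the linear map `monomial w 1 ↦ monomial (r w) 1`, every
`f` is congruent to `L (Φ f)` modulo `I`, and `L (Φ f) = 0` on the kernel. -/
theorem ker_le_of_map_monomial {σ τ R : Type*} [CommRing R]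
    (Φ : MvPolynomial σ R →ₐ[R] MvPolynomial τ R) (e : (σ →₀ ℕ) → (τ →₀ ℕ))
    (hΦ : ∀ u, Φ (monomial u 1) = monomial (e u) 1) (I : Ideal (MvPolynomial σ R))
    (hI : ∀ u v, e u = e v → monomial u 1 - monomial v 1 ∈ I) : RingHom.ker Φ ≤ I := by
  let r := Function.invFun e
  let L := (basisMonomials τ R).constr R fun w => (monomial (r w) 1 : MvPolynomial σ R)
  have hL (u : σ →₀ ℕ) (c : R) : L (Φ (monomial u c)) = monomial (r (e u)) c := by
    have hw : L (monomial (e u) 1) = monomial (r (e u)) 1 := by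
      simpa using (basisMonomials τ R).constr_basis R _ (e u)
    rw [← mul_one c, ← smul_eq_mul, ← smul_monomial, map_smul, hΦ, map_smul, hw, smul_monomial]
  have hsub (f : MvPolynomial σ R) : f - L (Φ f) ∈ I := by
    induction f using MvPolynomial.induction_on' with
    | monomial u c =>
      rw [hL, ← mul_one c, ← C_mul_monomial, ← C_mul_monomial, ← mul_sub]
      exact I.mul_mem_left _ (hI _ _ (Function.invFun_eq ⟨u, rfl⟩).symm)
    | add f g hf hg =>
      rw [map_add, map_add, add_sub_add_comm]
      exact I.add_mem hf hg
  intro f hf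
  simpa [RingHom.mem_ker.1 hf] using hsub f

theorem monomial_one_eq_prod_map_X {σ R : Type*} [CommSemiring R] (u : σ →₀ ℕ) :
    (monomial u 1 : MvPolynomial σ R) = (u.toMultiset.map X).prod := by
  rw [Finsupp.toMultiset_map, Finsupp.prod_toMultiset,
    Finsupp.prod_mapDomain_index (fun _ => pow_zero _) (fun _ _ _ => pow_add _ _ _), monomial_eq,
    C_1, one_mul]

theorem isQuadraticBinomial_X_mul_X_sub {σ K : Type} [Field K] (a b c d : σ) :
    IsQuadraticBinomial (X a * X b - X c * X d : MvPolynomial σ K) := by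
  refine ⟨Finsupp.single a 1 + Finsupp.single b 1, Finsupp.single c 1 + Finsupp.single d 1,
    ?_, ?_, by simp [X, monomial_mul]⟩ <;>
  simp [Finsupp.sum_add_index']

section Isotonian

variable {P Q : Type} [PartialOrder P] [Fintype P] [PartialOrder Q]

noncomputable def isotonianExponent (u : (P →o Q) →₀ ℕ) : P × Q →₀ ℕ :=
  u.sum fun φ n => n • ∑ p, Finsupp.single (p, φ p) 1

theorem isotonianMap_monomial (K : Type) [Field K] [Fintype Q] (u : (P →o Q) →₀ ℕ) :
    isotonianMap K P Q (monomial u 1) = monomial (isotonianExponent u) 1 := by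
  rw [isotonianMap, aeval_monomial, map_one, one_mul, isotonianExponent,
    monomial_finsupp_sum_index, C_1, one_mul]
  refine Finsupp.prod_congr fun φ _ => ?_
  rw [← one_pow (M := K) (u φ), ← monomial_pow, monomial_sum_one]
  rfl

theorem isotonianExponent_apply [DecidableEq Q] (u : (P →o Q) →₀ ℕ) (p : P) (q : Q) :
    isotonianExponent u (p, q) = (u.toMultiset.map (· p)).count q := by
  classical
  rw [Finsupp.toMultiset_map, Finsupp.count_toMultiset, Finsupp.mapDomain, isotonianExponent,
    Finsupp.sum_apply, Finsupp.sum_apply]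
  refine Finsupp.sum_congr fun φ _ => ?_
  rw [Finsupp.smul_apply, Finsupp.finsetSum_apply, Finset.sum_eq_single p
    (fun x _ hx => by simp [hx]) (by simp)]
  by_cases h : φ p = q <;> simp [h]

theorem map_apply_eq_of_isotonianExponent_eq {u v : (P →o Q) →₀ ℕ}
    (h : isotonianExponent u = isotonianExponent v) (p : P) :
    u.toMultiset.map (· p) = v.toMultiset.map (· p) := by
  classical
  ext q
  rw [← isotonianExponent_apply, ← isotonianExponent_apply, h]

variable (K : Type) [Field K] [Fintype Q]

theorem X_mul_X_sub_mem_isotonianIdeal {φ ψ φ' ψ' : P →o Q}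
    (h : ∀ x, ({φ x, ψ x} : Multiset Q) = {φ' x, ψ' x}) :
    X φ * X ψ - X φ' * X ψ' ∈ isotonianIdeal K P Q := by
  have hmul (α β : P →o Q) :
      isotonianMap K P Q (X α * X β) = ∏ x, X (x, α x) * X (x, β x) := by
    simp [isotonianMap, Finset.prod_mul_distrib]
  rw [isotonianIdeal, RingHom.mem_ker, map_sub, hmul, hmul, sub_eq_zero]
  refine Finset.prod_congr rfl fun x _ => ?_
  simpa using congrArg (fun s : Multiset Q => (s.map fun y => (X (x, y) :
    MvPolynomial (P × Q) K)).prod) (h x)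

theorem SwapStep.prod_sub_mem {M M' : Multiset (P →o Q)} (h : SwapStep M M') :
    (M.map X).prod - (M'.map X).prod ∈
      Ideal.span {f | f ∈ isotonianIdeal K P Q ∧ IsQuadraticBinomial f} := by
  obtain ⟨φ, ψ, φ', ψ', C, hswap, rfl, rfl⟩ := h
  have : ((φ ::ₘ ψ ::ₘ C).map X).prod - ((φ' ::ₘ ψ' ::ₘ C).map X).prod =
      (X φ * X ψ - X φ' * X ψ' : MvPolynomial (P →o Q) K) * (C.map X).prod := by
    simp only [Multiset.map_cons, Multiset.prod_cons]
    ring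
  rw [this]
  exact Ideal.mul_mem_right _ _ (Ideal.subset_span ⟨X_mul_X_sub_mem_isotonianIdeal K hswap,
    isQuadraticBinomial_X_mul_X_sub _ _ _ _⟩)

theorem Relation.ReflTransGen.swapStep_prod_sub_mem {M M' : Multiset (P →o Q)}
    (h : Relation.ReflTransGen SwapStep M M') :
    (M.map X).prod - (M'.map X).prod ∈
      Ideal.span {f | f ∈ isotonianIdeal K P Q ∧ IsQuadraticBinomial f} := by
  induction h with
  | refl => rw [sub_self]; exact Ideal.zero_mem _
  | tail _ hstep ih =>
    rw [← sub_add_sub_cancel]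
    exact Ideal.add_mem _ ih (hstep.prod_sub_mem K)

end Isotonian

/-- If `P` is rooted and every proper poset cycle in `Q` of length `≥ 6` admits a chord,
then `J_{P,Q}` is generated by quadratic binomials. -/
theorem statement14 (K P Q : Type) [Field K] [PartialOrder P] [Fintype P]
    [PartialOrder Q] [Fintype Q]
    (hmin : ∃ p₀ : P, ∀ x : P, p₀ ≤ x)
    (hroot : ∀ a b c : P, a ≤ c → b ≤ c → a ≤ b ∨ b ≤ a)
    (hQ : ∀ m : ℕ, 3 ≤ m → ∀ q : ℕ → Q, IsPosetCycle m q → IsProperPosetCycle m q →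
      HasChord m q) :
    isotonianIdeal K P Q =
      Ideal.span {f | f ∈ isotonianIdeal K P Q ∧ IsQuadraticBinomial f} := by
  refine le_antisymm ?_ (Ideal.span_le.2 fun f hf => hf.1)
  refine ker_le_of_map_monomial _ isotonianExponent (isotonianMap_monomial K) _
    fun u v huv => ?_
  rw [monomial_one_eq_prod_map_X, monomial_one_eq_prod_map_X]
  exact (reflTransGen_swapStep_of_map_apply_eq hQ hmin hroot
    (map_apply_eq_of_isotonianExponent_eq huv)).swapStep_prod_sub_mem K
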